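/- If v is a pendant vertex of a graph G, then (γ_sp(G−v) + γ_sp(G/v))/2 ≤ γ_sp(G) ≤ (γ_sp(G−v) + γ_sp(G/v))/2 + 1. -/
import Mathlib


open SimpleGraph

/-- A super dominating set: a dominating set `S` such that every vertex `u ∉ S`
has a private "super" dominator `v ∈ S` with `N(v) ∩ (V \ S) = {u}`. -/
def IsSuperDominatingSet {V : Type*} (G : SimpleGraph V) (S : Finset V) : Prop :=
  (∀ u ∉ S, ∃ v ∈ S, G.Adj v u) ∧
  (∀ u ∉ S, ∃ v ∈ S, ∀ w, (G.Adj v w ∧ w ∉ S) ↔ w = u)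

/-- The super domination number: minimum size of a super dominating set. -/
noncomputable def superDominationNumber {V : Type*} (G : SimpleGraph V) : ℕ :=
  sInf {n | ∃ S : Finset V, IsSuperDominatingSet G S ∧ S.card = n}

/-- Edge contraction of the edge `uv`: `v` is deleted and `u` plays the role of the merged
vertex, adjacent to all former neighbours of `u` or `v`. -/
def contractEdge {V : Type*} (G : SimpleGraph V) (u v : V) : SimpleGraph {x : V // x ≠ v} :=
  SimpleGraph.fromRel (fun a b => G.Adj a.val b.val ∨ (a.val = u ∧ G.Adj v b.val))

/-- Vertex deletion. -/
def deleteVertex {V : Type*} (G : SimpleGraph V) (v : V) : SimpleGraph {x : V // x ≠ v} :=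
  G.induce {x : V | x ≠ v}

/-- Vertex contraction: delete `v` and make its open neighbourhood a clique. -/
def contractVertex {V : Type*} (G : SimpleGraph V) (v : V) : SimpleGraph {x : V // x ≠ v} :=
  SimpleGraph.fromRel (fun a b => G.Adj a.val b.val ∨ (G.Adj v a.val ∧ G.Adj v b.val))

section Aux

open SimpleGraph Finset

variable {V : Type*}

lemma univ_superdom [Fintype V] (G : SimpleGraph V) :
    IsSuperDominatingSet G Finset.univ := by
  constructor <;> intro u hu <;> exact absurd (Finset.mem_univ u) hu

lemma sdn_nonempty [Fintype V] (G : SimpleGraph V) :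
    {n | ∃ S : Finset V, IsSuperDominatingSet G S ∧ S.card = n}.Nonempty :=
  ⟨_, Finset.univ, univ_superdom G, rfl⟩

lemma sdn_mem [Fintype V] (G : SimpleGraph V) :
    ∃ S : Finset V, IsSuperDominatingSet G S ∧ S.card = superDominationNumber G :=
  Nat.sInf_mem (sdn_nonempty G)

lemma sdn_le [Fintype V] (G : SimpleGraph V) (S : Finset V)
    (h : IsSuperDominatingSet G S) : superDominationNumber G ≤ S.card :=
  Nat.sInf_le ⟨S, h, rfl⟩

/-- contraction = deletion for a pendant vertex -/
lemma contract_eq_delete (G : SimpleGraph V) (v u : V)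
    (hu : G.neighborSet v = {u}) : contractVertex G v = deleteVertex G v := by
  have hadj : ∀ x, G.Adj v x ↔ x = u := by
    intro x
    rw [← SimpleGraph.mem_neighborSet, hu, Set.mem_singleton_iff]
  ext a b
  show (a ≠ b ∧ _) ↔ G.Adj a.val b.val
  constructor
  · rintro ⟨hab, (⟨h | ⟨h1, h2⟩⟩ | ⟨h | ⟨h1, h2⟩⟩)⟩
    · exact h
    · exact absurd (Subtype.ext (((hadj _).mp h1).trans (((hadj _).mp h2)).symm)) hab
    · exact h.symm
    · exact absurd (Subtype.ext (((hadj _).mp h1).trans (((hadj _).mp h2)).symm)).symm hab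
  · intro h
    exact ⟨fun he => G.irrefl (he ▸ h), Or.inl (Or.inl h)⟩

/-- lower bound construction -/
lemma lower (G : SimpleGraph V) (v u : V) (hu : G.neighborSet v = {u})
    (S : Finset V) (hS : IsSuperDominatingSet G S) [DecidableEq V] :
    ∃ S' : Finset {x : V // x ≠ v}, IsSuperDominatingSet (deleteVertex G v) S' ∧
      S'.card ≤ S.card := by
  have hadj : ∀ x, G.Adj v x ↔ x = u := by
    intro x
    rw [← SimpleGraph.mem_neighborSet, hu, Set.mem_singleton_iff]
  have huv : u ≠ v := by
    intro h
    exact G.irrefl (h ▸ (hadj u).mpr rfl)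
  obtain ⟨hdom, hsup⟩ := hS
  by_cases hvS : v ∈ S
  · -- use T = insert u (S.erase v)
    set T : Finset V := insert u (S.erase v) with hT
    have hvT : v ∉ T := by
      simp [hT, Ne.symm huv]
    have hmemS : ∀ x, x ≠ v → x ∉ T → x ∉ S ∧ x ≠ u := by
      intro x hxv hx
      constructor
      · intro hxS
        exact hx (mem_insert_of_mem (mem_erase.mpr ⟨hxv, hxS⟩))
      · intro h; exact hx (h ▸ mem_insert_self u _)
    refine ⟨T.subtype (· ≠ v), ⟨?_, ?_⟩, ?_⟩
    · intro x hx
      rw [mem_subtype] at hx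
      obtain ⟨hxS, hxu⟩ := hmemS x.val x.prop hx
      obtain ⟨w, hwS, hwx⟩ := hdom x.val hxS
      have hwv : w ≠ v := by
        intro h
        exact hxu ((hadj x).mp (h ▸ hwx))
      refine ⟨⟨w, hwv⟩, ?_, hwx⟩
      rw [mem_subtype]
      exact mem_insert_of_mem (mem_erase.mpr ⟨hwv, hwS⟩)
    · intro x hx
      rw [mem_subtype] at hx
      obtain ⟨hxS, hxu⟩ := hmemS x.val x.prop hx
      obtain ⟨w, hwS, hwx⟩ := hsup x.val hxS
      have hxv : (x : V) ≠ v := x.prop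
      have hwv : w ≠ v := by
        rintro rfl
        exact hxu ((hadj x.val).mp ((hwx x.val).mpr rfl).1)
      refine ⟨⟨w, hwv⟩, ?_, ?_⟩
      · rw [mem_subtype]
        exact mem_insert_of_mem (mem_erase.mpr ⟨hwv, hwS⟩)
      · intro y
        rw [mem_subtype]
        constructor
        · rintro ⟨hy1, hy2⟩
          obtain ⟨hyS, hyu⟩ := hmemS y.val y.prop hy2
          exact Subtype.ext ((hwx y.val).mp ⟨hy1, hyS⟩)
        · intro hy
          rw [hy]
          exact ⟨((hwx x.val).mpr rfl).1, hx⟩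
    · calc (T.subtype (· ≠ v)).card ≤ T.card := by
            rw [Finset.card_subtype]; exact card_filter_le _ _
        _ ≤ (S.erase v).card + 1 := card_insert_le _ _
        _ = S.card := Finset.card_erase_add_one hvS
  · -- v ∉ S : use S itself
    refine ⟨S.subtype (· ≠ v), ⟨?_, ?_⟩, ?_⟩
    · intro x hx
      rw [mem_subtype] at hx
      obtain ⟨w, hwS, hwx⟩ := hdom x.val hx
      have hwv : w ≠ v := fun h => hvS (h ▸ hwS)
      exact ⟨⟨w, hwv⟩, by rw [mem_subtype]; exact hwS, hwx⟩
    · intro x hx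
      rw [mem_subtype] at hx
      obtain ⟨w, hwS, hwx⟩ := hsup x.val hx
      have hwv : w ≠ v := fun h => hvS (h ▸ hwS)
      refine ⟨⟨w, hwv⟩, by rw [mem_subtype]; exact hwS, ?_⟩
      intro y
      rw [mem_subtype]
      constructor
      · rintro ⟨hy1, hy2⟩
        exact Subtype.ext ((hwx y.val).mp ⟨hy1, hy2⟩)
      · intro hy
        rw [hy]
        exact ⟨((hwx x.val).mpr rfl).1, hx⟩
    · rw [Finset.card_subtype]; exact card_filter_le _ _

/-- upper bound construction -/
lemma upper (G : SimpleGraph V) (v : V)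
    (S' : Finset {x : V // x ≠ v}) (hS : IsSuperDominatingSet (deleteVertex G v) S')
    [DecidableEq V] :
    ∃ S : Finset V, IsSuperDominatingSet G S ∧ S.card ≤ S'.card + 1 := by
  obtain ⟨hdom, hsup⟩ := hS
  set T : Finset V := insert v (S'.map (Function.Embedding.subtype _)) with hT
  have hmem : ∀ x (hx : x ≠ v), x ∉ T → (⟨x, hx⟩ : {x : V // x ≠ v}) ∉ S' := by
    intro x hx hxT hmem
    exact hxT (mem_insert_of_mem (Finset.mem_map.mpr ⟨⟨x, hx⟩, hmem, rfl⟩))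
  refine ⟨T, ⟨?_, ?_⟩, ?_⟩
  · intro x hx
    have hxv : x ≠ v := fun h => hx (h ▸ mem_insert_self v _)
    obtain ⟨w, hwS, hwx⟩ := hdom ⟨x, hxv⟩ (hmem x hxv hx)
    exact ⟨w.val, mem_insert_of_mem (Finset.mem_map.mpr ⟨w, hwS, rfl⟩), hwx⟩
  · intro x hx
    have hxv : x ≠ v := fun h => hx (h ▸ mem_insert_self v _)
    obtain ⟨w, hwS, hwx⟩ := hsup ⟨x, hxv⟩ (hmem x hxv hx)
    refine ⟨w.val, mem_insert_of_mem (Finset.mem_map.mpr ⟨w, hwS, rfl⟩), ?_⟩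
    intro y
    constructor
    · rintro ⟨hy1, hy2⟩
      have hyv : y ≠ v := fun h => hy2 (h ▸ mem_insert_self v _)
      have : (⟨y, hyv⟩ : {x : V // x ≠ v}) = ⟨x, hxv⟩ :=
        (hwx ⟨y, hyv⟩).mp ⟨hy1, hmem y hyv hy2⟩
      exact congrArg Subtype.val this
    · intro hy
      rw [hy]
      exact ⟨((hwx ⟨x, hxv⟩).mpr rfl).1, hx⟩
  · calc T.card ≤ (S'.map _).card + 1 := card_insert_le _ _
      _ = S'.card + 1 := by rw [Finset.card_map]

end Aux

/-- If `v` is a pendant vertex of `G`, then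
`(γ_sp(G-v) + γ_sp(G/v))/2 ≤ γ_sp(G) ≤ (γ_sp(G-v) + γ_sp(G/v))/2 + 1`. -/
theorem stmt16 {V : Type*} [Fintype V] (G : SimpleGraph V) (v : V)
    (hv : (G.neighborSet v).ncard = 1) :
    ((superDominationNumber (deleteVertex G v) : ℝ) +
        (superDominationNumber (contractVertex G v) : ℝ)) / 2 ≤
      (superDominationNumber G : ℝ) ∧
    (superDominationNumber G : ℝ) ≤
      ((superDominationNumber (deleteVertex G v) : ℝ) +
        (superDominationNumber (contractVertex G v) : ℝ)) / 2 + 1 := by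
  classical
  have : Fintype {x : V // x ≠ v} := Fintype.ofFinite _
  obtain ⟨u, hu⟩ := Set.ncard_eq_one.mp hv
  rw [contract_eq_delete G v u hu]
  have h1 : superDominationNumber (deleteVertex G v) ≤ superDominationNumber G := by
    obtain ⟨S, hS, hcard⟩ := sdn_mem G
    obtain ⟨S', hS', hle⟩ := lower G v u hu S hS
    exact le_trans (sdn_le _ _ hS') (hcard ▸ hle)
  have h2 : superDominationNumber G ≤ superDominationNumber (deleteVertex G v) + 1 := by
    obtain ⟨S', hS', hcard⟩ := sdn_mem (deleteVertex G v)
    obtain ⟨S, hS, hle⟩ := upper G v S' hS'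
    exact le_trans (sdn_le _ _ hS) (hcard ▸ hle)
  constructor
  · rw [div_le_iff₀ (by norm_num : (0:ℝ) < 2)]
    linarith [(Nat.cast_le (α := ℝ)).mpr h1]
  · rw [div_add' _ _ _ (by norm_num : (2:ℝ) ≠ 0), le_div_iff₀ (by norm_num : (0:ℝ) < 2)]
    have hc := (Nat.cast_le (α := ℝ)).mpr h2
    push_cast at hc ⊢
    linarith
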